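/- arXiv:1304.1226 — 2 statements merged into one kernel-verified Lean document; each statement's English description precedes it below -/
import Mathlib

section
/- Andrews' corrected identity holds for all natural numbers n: Σ_{j∈ℤ} C(n+1, 10j)₂ − Σ_{j∈ℤ} C(n+1, 10j+1)₂ = Fₙ·(Fₙ + 1)/2, where both sums have only finitely many nonzero terms (since C(n+1, m)₂ = 0 for |m| > n+1). -/
open LaurentPolynomial

/-- The trinomial coefficient `C(n, j)₂`: the coefficient of `x^j` in
`(x⁻¹ + 1 + x)^n`, viewed in the ring of Laurent polynomials `ℤ[T;T⁻¹]`. -/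
noncomputable def trinom (n : ℕ) (j : ℤ) : ℤ :=
  (AddMonoidAlgebra.coeff (((T (-1) + 1 + T 1 : ℤ[T;T⁻¹])) ^ n)) j

/-!
Write `S_r(n) = ∑_j C(n, 10j + r)₂` for the sections of the trinomial row modulo 10.
Multiplying by `x⁻¹ + 1 + x` gives `S_r(n+1) = S_{r-1}(n) + S_r(n) + S_{r+1}(n)`, and
`S_r` depends only on `±r mod 10`, so the five differences `S_r - S_{r+1}`, `0 ≤ r ≤ 4`,
obey a closed linear recursion. Their closed forms in terms of `F_n` and `F_{n-1}`
are verified along this recursion using `F_{n+1} = F_n + F_{n-1}`; the `r = 0` one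
at `n + 1` is the identity.
-/

lemma trinom_neg (n : ℕ) (j : ℤ) : trinom n (-j) = trinom n j := by
  have h : invert ((T (-1) + 1 + T 1 : ℤ[T;T⁻¹]) ^ n) = (T (-1) + 1 + T 1) ^ n := by
    rw [map_pow, map_add, map_add, map_one, invert_T, invert_T, neg_neg]
    congr 1
    abel
  rw [trinom, ← invert_apply, h, trinom]

lemma trinom_zero (j : ℤ) : trinom 0 j = if j = 0 then 1 else 0 := by
  rw [trinom, pow_zero, AddMonoidAlgebra.one_def, AddMonoidAlgebra.coeff_single,
    Finsupp.single_apply]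
  simp only [eq_comm]

lemma trinom_succ (n : ℕ) (j : ℤ) :
    trinom (n + 1) j = trinom n (j - 1) + trinom n j + trinom n (j + 1) := by
  have hT : ∀ k : ℤ, (T k : ℤ[T;T⁻¹]) = AddMonoidAlgebra.single k 1 := fun _ => rfl
  simp only [trinom, pow_succ, mul_add, mul_one, AddMonoidAlgebra.coeff_add, Finsupp.add_apply,
    hT, AddMonoidAlgebra.coeff_mul_single_apply, neg_neg, ← sub_eq_add_neg]
  ring

lemma trinom_hasFiniteSupport (n : ℕ) : (trinom n).HasFiniteSupport :=
  Finsupp.hasFiniteSupport _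

noncomputable def trinomSection (n : ℕ) (m r : ℤ) : ℤ := ∑ᶠ j : ℤ, trinom n (m * j + r)

lemma trinomSection_succ (n : ℕ) {m : ℤ} (hm : m ≠ 0) (r : ℤ) :
    trinomSection (n + 1) m r =
      trinomSection n m (r - 1) + trinomSection n m r + trinomSection n m (r + 1) := by
  have hfin (s : ℤ) : (fun j : ℤ => trinom n (m * j + s)).HasFiniteSupport :=
    (trinom_hasFiniteSupport n).fun_comp_of_injective fun a b h => by simpa [hm] using h
  have hsplit (j : ℤ) : trinom (n + 1) (m * j + r) =
      trinom n (m * j + (r - 1)) + trinom n (m * j + r) + trinom n (m * j + (r + 1)) := by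
    rw [trinom_succ, add_sub_assoc, add_assoc (m * j) r 1]
  rw [trinomSection, finsum_congr hsplit, finsum_add_distrib ((hfin _).fun_add (hfin _)) (hfin _),
    finsum_add_distrib (hfin _) (hfin _)]
  rfl

lemma trinomSection_add_self (n : ℕ) (m r : ℤ) :
    trinomSection n m (r + m) = trinomSection n m r := by
  rw [trinomSection, trinomSection,
    ← finsum_comp_equiv (Equiv.addRight (1 : ℤ)) (f := fun j => trinom n (m * j + r))]
  exact finsum_congr fun j => congrArg (trinom n) (by simp only [Equiv.coe_addRight]; ring)

lemma trinomSection_neg (n : ℕ) (m r : ℤ) : trinomSection n m (-r) = trinomSection n m r := by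
  rw [trinomSection, trinomSection, ← finsum_comp_equiv (Equiv.neg ℤ)]
  refine finsum_congr fun j => ?_
  rw [Equiv.neg_apply, ← trinom_neg]
  congr 1
  ring

lemma trinomSection_zero_zero {m : ℤ} (hm : m ≠ 0) : trinomSection 0 m 0 = 1 := by
  rw [trinomSection, finsum_eq_single _ 0 fun j hj => by simp [trinom_zero, hm, hj]]
  simp [trinom_zero]

lemma trinomSection_zero_of_not_dvd {m r : ℤ} (h : ¬ m ∣ r) : trinomSection 0 m r = 0 :=
  finsum_eq_zero_of_forall_eq_zero fun j => by
    rw [trinom_zero, if_neg]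
    rintro hj
    exact h ⟨-j, by linarith⟩

lemma two_mul_trinomSection_ten_sub (n : ℕ) :
    let F : ℤ := Nat.fib n
    -- `G = F_{n-1}` for `n ≥ 1`, written so as to avoid truncated subtraction `n - 1`
    let G : ℤ := Nat.fib (n + 1) - Nat.fib n
    2 * (trinomSection n 10 0 - trinomSection n 10 1) = G ^ 2 + G ∧
    2 * (trinomSection n 10 1 - trinomSection n 10 2) = F ^ 2 + F ∧
    2 * (trinomSection n 10 2 - trinomSection n 10 3) = 2 * F * G ∧
    2 * (trinomSection n 10 3 - trinomSection n 10 4) = F ^ 2 - F ∧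
    2 * (trinomSection n 10 4 - trinomSection n 10 5) = G ^ 2 - G := by
  induction n with
  | zero =>
    have hvanish (r : ℤ) (h0 : 0 < r) (h5 : r ≤ 5) : trinomSection 0 10 r = 0 :=
      trinomSection_zero_of_not_dvd fun h => by omega
    simp (disch := norm_num) only [trinomSection_zero_zero (by norm_num : (10 : ℤ) ≠ 0),
      hvanish 1, hvanish 2, hvanish 3, hvanish 4, hvanish 5]
    norm_num
  | succ n ih =>
    obtain ⟨h0, h1, h2, h3, h4⟩ := ih
    have hsucc (r : ℤ) := trinomSection_succ n (by norm_num : (10 : ℤ) ≠ 0) r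
    have hm1 : trinomSection n 10 (-1) = trinomSection n 10 1 := trinomSection_neg n 10 1
    have h6 : trinomSection n 10 6 = trinomSection n 10 4 := by
      rw [← trinomSection_neg n 10 4, ← trinomSection_add_self n 10 (-4)]
      norm_num
    have hfib : (Nat.fib (n + 2) : ℤ) = Nat.fib n + Nat.fib (n + 1) := by
      rw [Nat.fib_add_two, Nat.cast_add]
    norm_num only [hsucc, hm1, h6, hfib]
    refine ⟨?_, ?_, ?_, ?_, ?_⟩
    · linear_combination h1
    · linear_combination h0 + h1 + h2
    · linear_combination h1 + h2 + h3
    · linear_combination h2 + h3 + h4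
    · linear_combination h3

/-- Andrews' corrected identity. -/
theorem andrews_identity (n : ℕ) :
    (∑ᶠ j : ℤ, trinom (n + 1) (10 * j)) - (∑ᶠ j : ℤ, trinom (n + 1) (10 * j + 1)) =
      (Nat.fib n : ℤ) * ((Nat.fib n : ℤ) + 1) / 2 := by
  have h := (two_mul_trinomSection_ten_sub (n + 1)).1
  simp only [Nat.fib_add_two, Nat.cast_add, add_sub_cancel_right] at h
  have hS0 : ∑ᶠ j : ℤ, trinom (n + 1) (10 * j) = trinomSection (n + 1) 10 0 := by
    simp only [trinomSection, add_zero]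
  rw [hS0, ← trinomSection]
  exact Int.eq_ediv_of_mul_eq_right two_ne_zero (by linear_combination h)
end

section
/- Let P be a Laurent polynomial with integer coefficients, let k ≥ 1 be an integer, define A(n, k, a) := Σ_{j∈ℤ} [coefficient of x^(kj+a) in Pⁿ] for 0 ≤ a < k, and let f_{k,a}(t) := Σ_{n≥0} A(n, k, a) tⁿ ∈ ℤ[[t]]. Then all k generating functions f_{k,a} are rational with a common denominator: there exists a polynomial D(t) ∈ ℤ[t] with D(0) = 1 and deg D ≤ k, and for each a a polynomial N_a(t) ∈ ℤ[t] with deg N_a < k, such that D(t) · f_{k,a}(t) = N_a(t) as formal power series in ℤ[[t]]. -/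
/-! Reducing exponents modulo `k`, `A(n, k, a)` becomes the coefficient at `a` of `Qⁿ`, where `Q`
is the image of `P` in the group ring `ℤ[ℤ/k]`, a free `ℤ`-module of rank `k`. Cayley–Hamilton for
multiplication by `Q` gives a monic `χ` of degree `k` with `χ(Q) = 0`, so every sequence
`n ↦ A(n, k, a)` satisfies the linear recurrence with characteristic polynomial `χ`, and the
reversed polynomial of `χ` is a common denominator. -/

open LaurentPolynomial

/-- The generalized Euler–Andrews sum `A(n, k, a) = Σ_{j∈ℤ} [coefficient of x^(kj+a) in Pⁿ]`,
where the coefficients are taken in the ring of Laurent polynomials `ℤ[T;T⁻¹]`. -/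
noncomputable def genA (P : ℤ[T;T⁻¹]) (k : ℕ) (n : ℕ) (a : ℤ) : ℤ :=
  ∑ᶠ j : ℤ, AddMonoidAlgebra.coeff (P ^ n) ((k : ℤ) * j + a)

/-- The generating function `f_{k,a}(t) = Σ_{n≥0} A(n,k,a) tⁿ` in `ℤ[[t]]`. -/
noncomputable def genF (P : ℤ[T;T⁻¹]) (k : ℕ) (a : ℤ) : PowerSeries ℤ :=
  PowerSeries.mk fun n => genA P k n a

open Finset

theorem Finsupp.finsum_apply_mul_add_eq_mapDomain_intCast {M : Type*} [AddCommMonoid M]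
    {k : ℕ} [NeZero k] (v : ℤ →₀ M) (a : ℤ) :
    ∑ᶠ j : ℤ, v (k * j + a) = v.mapDomain (Int.cast : ℤ → ZMod k) a := by
  have hinj : Function.Injective fun j : ℤ => (k : ℤ) * j + a := fun i j h => by
    simpa [NeZero.ne k] using h
  rw [← finsum_mem_range hinj, mapDomain_apply_eq_sum]
  refine finsum_mem_eq_sum_of_subset _ (fun m ⟨hm, hv⟩ => ?_) fun m hm => ?_
  · obtain ⟨j, rfl⟩ := hm
    simpa using hv
  · rw [coe_filter, Set.mem_ofPred_eq, ZMod.intCast_eq_intCast_iff_dvd_sub] at hm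
    obtain ⟨j, hj⟩ := hm.2
    exact ⟨-j, show (k : ℤ) * -j + a = m by linarith⟩

section

open Polynomial

theorem Algebra.exists_monic_natDegree_eq_finrank_aeval_eq_zero (R : Type*) {A : Type*}
    [CommRing R] [StrongRankCondition R] [Ring A] [Algebra R A] [Module.Free R A]
    [Module.Finite R A] (x : A) :
    ∃ χ : R[X], χ.Monic ∧ χ.natDegree = Module.finrank R A ∧ aeval x χ = 0 := by
  refine ⟨(lmul R A x).charpoly, LinearMap.charpoly_monic _, LinearMap.charpoly_natDegree _, ?_⟩
  have h := LinearMap.aeval_self_charpoly (lmul R A x)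
  rw [aeval_algHom_apply] at h
  simpa using congrArg (· 1) h

theorem AddMonoidAlgebra.finrank_eq_card (R G : Type*) [Ring R] [StrongRankCondition R]
    [Fintype G] :
    Module.finrank R (AddMonoidAlgebra R G) = Fintype.card G := by
  rw [(AddMonoidAlgebra.coeffLinearEquiv R).finrank_eq, Module.finrank_finsupp_self]

theorem Polynomial.sum_coeff_mul_pow_add_eq_zero {R A : Type*} [CommSemiring R] [Semiring A]
    [Algebra R A] {x : A} {χ : R[X]} (hχ : aeval x χ = 0) (φ : A →ₗ[R] R) (m : ℕ) :
    ∑ j ∈ range (χ.natDegree + 1), χ.coeff j * φ (x ^ (m + j)) = 0 := by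
  calc _ = φ (x ^ m * aeval x χ) := by
        simp only [aeval_eq_sum_range, mul_sum, map_sum, mul_smul_comm, map_smul, pow_add,
          smul_eq_mul]
    _ = 0 := by rw [hχ, mul_zero, map_zero]

namespace PowerSeries
variable {R : Type*} [CommSemiring R]

theorem coe_trunc_eq_self {f : R⟦X⟧} {d : ℕ} (hf : ∀ n, d ≤ n → coeff n f = 0) :
    (trunc d f : R⟦X⟧) = f := by
  ext n
  rw [Polynomial.coeff_coe, coeff_trunc]
  split_ifs with h
  · rfl
  · exact (hf n (not_lt.mp h)).symm

theorem coeff_reverse_mul_mk_eq_zero {χ : R[X]} {u : ℕ → R}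
    (hu : ∀ m, ∑ j ∈ range (χ.natDegree + 1), χ.coeff j * u (m + j) = 0)
    {n : ℕ} (hn : χ.natDegree ≤ n) : coeff n ((χ.reverse : R⟦X⟧) * mk u) = 0 := by
  set d := χ.natDegree
  have hsupp : ∀ i ∈ range (n + 1), i ∉ range (d + 1) → χ.reverse.coeff i * u (n - i) = 0 :=
    fun i _ hi => by
      rw [coeff_eq_zero_of_natDegree_lt ((reverse_natDegree_le χ).trans_lt (by simpa using hi)),
        zero_mul]
  have hrefl : ∀ j ∈ range (d + 1),
      χ.reverse.coeff (d + 1 - 1 - j) * u (n - (d + 1 - 1 - j)) = χ.coeff j * u (n - d + j) :=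
    fun j hj => by
      have hj : j ≤ d := Nat.lt_succ_iff.mp (mem_range.mp hj)
      rw [coeff_reverse, revAt_le (by omega), Nat.add_sub_cancel, Nat.sub_sub_self hj,
        show n - (d - j) = n - d + j by omega]
  calc coeff n ((χ.reverse : R⟦X⟧) * mk u)
      = ∑ i ∈ range (n + 1), χ.reverse.coeff i * u (n - i) := by
        simp [coeff_mul, Nat.sum_antidiagonal_eq_sum_range_succ_mk]
    _ = ∑ i ∈ range (d + 1), χ.reverse.coeff i * u (n - i) :=
        (sum_subset (range_subset_range.mpr (by omega)) hsupp).symm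
    _ = ∑ j ∈ range (d + 1), χ.coeff j * u (n - d + j) := by
        rw [← sum_range_reflect]; exact sum_congr rfl hrefl
    _ = 0 := hu (n - d)

end PowerSeries

end

theorem genA_eq_coeff_pow_mapDomain (P : ℤ[T;T⁻¹]) (k : ℕ) [NeZero k] (n : ℕ) (a : ℤ) :
    genA P k n a =
      ((AddMonoidAlgebra.mapDomainRingHom ℤ (Int.castAddHom (ZMod k)) P) ^ n).coeff a := by
  rw [genA, Finsupp.finsum_apply_mul_add_eq_mapDomain_intCast, ← map_pow]
  rfl

/-- All `k` generating functions `f_{k,a}` are rational, with a common denominator of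
degree at most  and numerators of degree less than . -/
theorem genF_rational (P : ℤ[T;T⁻¹]) (k : ℕ) (hk : 1 ≤ k) :
    ∃ D : Polynomial ℤ, D.coeff 0 = 1 ∧ D.natDegree ≤ k ∧
      ∀ a : ℤ, 0 ≤ a → a < (k : ℤ) →
        ∃ N : Polynomial ℤ, N.natDegree < k ∧
          (D : PowerSeries ℤ) * genF P k a = (N : PowerSeries ℤ) := by
  obtain ⟨k, rfl⟩ : ∃ k', k = k' + 1 := ⟨k - 1, by omega⟩
  set Q := AddMonoidAlgebra.mapDomainRingHom ℤ (Int.castAddHom (ZMod (k + 1))) P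
  obtain ⟨χ, hmonic, hdeg, hχ⟩ := Algebra.exists_monic_natDegree_eq_finrank_aeval_eq_zero ℤ Q
  rw [AddMonoidAlgebra.finrank_eq_card, ZMod.card] at hdeg
  refine ⟨χ.reverse, by rw [Polynomial.coeff_zero_reverse, hmonic.leadingCoeff],
    hdeg ▸ Polynomial.reverse_natDegree_le χ, fun a _ _ => ?_⟩
  have hgenF : genF P (k + 1) a = PowerSeries.mk fun n => (Q ^ n).coeff a :=
    congrArg PowerSeries.mk (funext fun n => genA_eq_coeff_pow_mapDomain P (k + 1) n a)
  have hrec := Polynomial.sum_coeff_mul_pow_add_eq_zero hχ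
    (Finsupp.lapply (a : ZMod (k + 1)) ∘ₗ (AddMonoidAlgebra.coeffLinearEquiv ℤ).toLinearMap)
  refine ⟨PowerSeries.trunc (k + 1) (χ.reverse * genF P (k + 1) a),
    PowerSeries.natDegree_trunc_lt _ _, (PowerSeries.coe_trunc_eq_self fun n hn => ?_).symm⟩
  rw [hgenF]
  exact PowerSeries.coeff_reverse_mul_mk_eq_zero hrec (hdeg ▸ hn)
end
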